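/- In the Gaudin realization, the B-operators satisfy the analytic identity ∂B_M(μ₁,…,μ_M)/∂z_a = −∑_{i=1}^{M} ∂/∂μᵢ ( X⁻_a(μᵢ) B^(1)_{M−1}(μ^(i)) ), where X⁻_a(μ) = X⁻_a/(μ − z_a) − (ξ/2)h_a, for each site a = 1,…,N. -/

import Mathlib

open Finset

/-- The operators B^(k)_M(μ₁,…,μ_M) = ∏_{n=k}^{M+k−1} (X⁻(μ_{n−k+1}) + nξ). -/
noncomputable def Bop {A : Type*} [Ring A] [Module ℂ A]
    (Xm : ℂ → A) (ξ : ℂ) : ℕ → List ℂ → A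
  | _, [] => 1
  | k, μ :: t => (Xm μ + ((k : ℂ) * ξ) • (1 : A)) * Bop Xm ξ (k + 1) t

/-- the argument tuple μ with the i-th entry removed (in increasing index order) -/
noncomputable def rmv {M : ℕ} (μ : Fin M → ℂ) (i : Fin M) : List ℂ :=
  ((Finset.univ.erase i).sort (· ≤ ·)).map μ

/-- the twisted Gaudin generator X⁻(λ) = ∑_b (X⁻_b/(λ−z_b) − (ξ/2)h_b),
    as a function of the inhomogeneity parameters z -/
noncomputable def XmGaudinC {H : Type*} [NormedAddCommGroup H] [NormedSpace ℂ H]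
    {N : ℕ} (z : Fin N → ℂ) (ξ : ℂ) (XmA hA : Fin N → (H →L[ℂ] H)) (lam : ℂ) :
    H →L[ℂ] H :=
  ∑ b, ((lam - z b)⁻¹ • XmA b - (ξ / 2) • hA b)

/-!
Only the factors `X⁻(μₙ)` of `B_M(μ)` depend on `z_a`, each through the single term
`X⁻_a / (μₙ − z_a)`, whose `z_a`-derivative is `X⁻_a / (μₙ − z_a)²`. By the product rule,
`∂B_M/∂z_a` is a sum of products in which this `X⁻_a` sits in the `n`-th slot. Since
`[X⁻(λ), X⁻_a] = ξ X⁻_a`, moving `X⁻_a` to the front past a factor `X⁻(μ) + kξ` turns it into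
`X⁻(μ) + (k+1)ξ`; so the `n`-th term equals `(μₙ − z_a)⁻² X⁻_a B^(1)_{M−1}(μ^(n))`. This is
exactly `−∂/∂μₙ` of `X⁻_a(μₙ) B^(1)_{M−1}(μ^(n))`, as `B^(1)_{M−1}(μ^(n))` does not involve `μₙ`.
-/

theorem Fin.sort_univ_erase {n : ℕ} (i : Fin n) :
    (univ.erase i).sort (· ≤ ·) = (List.finRange n).filter (· ≠ i) :=
  (univ.erase i).sortedLT_sort.eq_of_mem_iff
    ((List.sortedLT_finRange n).pairwise.filter _).sortedLT (by simp)

theorem rmv_zero {M : ℕ} (μ : Fin (M + 1) → ℂ) :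
    rmv μ 0 = List.ofFn (fun j : Fin M => μ j.succ) := by
  simp [rmv, Fin.sort_univ_erase, List.finRange_succ, List.filter_map, Function.comp_def,
    Fin.succ_ne_zero, List.ofFn_eq_map]

theorem rmv_succ {M : ℕ} (μ : Fin (M + 2) → ℂ) (i : Fin (M + 1)) :
    rmv μ i.succ = μ 0 :: rmv (fun j => μ j.succ) i := by
  rw [rmv, rmv, Fin.sort_univ_erase, Fin.sort_univ_erase, List.finRange_succ]
  simp [List.filter_map, Function.comp_def, (Fin.succ_ne_zero i).symm]

/-- The product-rule expansion of the derivative of `Bop`, `Fd λ` being the derivative of the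
factor at `λ`. -/
noncomputable def BopDeriv {A : Type*} [Ring A] [Module ℂ A]
    (F Fd : ℂ → A) (ξ : ℂ) : ℕ → List ℂ → A
  | _, [] => 0
  | k, μ :: t => Fd μ * Bop F ξ (k + 1) t
      + (F μ + ((k : ℂ) * ξ) • (1 : A)) * BopDeriv F Fd ξ (k + 1) t

theorem hasDerivAt_Bop {A : Type*} [NormedRing A] [NormedAlgebra ℂ A]
    (G : ℂ → ℂ → A) (Fd : ℂ → A) (ξ t₀ : ℂ) (L : List ℂ)
    (h : ∀ lam ∈ L, HasDerivAt (fun t => G t lam) (Fd lam) t₀) (k : ℕ) :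
    HasDerivAt (fun t => Bop (G t) ξ k L) (BopDeriv (G t₀) Fd ξ k L) t₀ := by
  induction L generalizing k with
  | nil => simpa [Bop, BopDeriv] using hasDerivAt_const t₀ (1 : A)
  | cons μ t ih =>
    have hhead := (h μ List.mem_cons_self).add_const (((k : ℂ) * ξ) • (1 : A))
    have htail := ih (fun l hl => h l (List.mem_cons_of_mem μ hl)) (k + 1)
    simpa [Bop, BopDeriv] using hhead.fun_mul htail

section Algebra

variable {A : Type*} [Ring A] [Algebra ℂ A]

theorem add_smul_one_mul_of_mul_eq {x y : A} {ξ : ℂ} (hxy : x * y = y * x + ξ • y) (c : ℂ) :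
    (x + c • 1) * y = y * (x + (c + ξ) • 1) := by
  rw [add_mul, mul_add, hxy, smul_mul_assoc, mul_smul_comm, one_mul, mul_one, add_smul]
  abel

theorem BopDeriv_smul_eq_sum (F : ℂ → A) (Xa : A) (c : ℂ → ℂ) (ξ : ℂ)
    (hF : ∀ lam, F lam * Xa = Xa * F lam + ξ • Xa) (M : ℕ) (μ : Fin (M + 1) → ℂ) (k : ℕ) :
    BopDeriv F (fun lam => c lam • Xa) ξ k (List.ofFn μ)
      = ∑ i, c (μ i) • (Xa * Bop F ξ (k + 1) (rmv μ i)) := by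
  induction M generalizing k with
  | zero =>
    simp [List.ofFn_succ, BopDeriv, Bop, rmv_zero]
  | succ M ih =>
    have hshift : (F (μ 0) + ((k : ℂ) * ξ) • 1) * Xa
        = Xa * (F (μ 0) + (((k + 1 : ℕ) : ℂ) * ξ) • 1) := by
      rw [add_smul_one_mul_of_mul_eq (hF (μ 0))]
      push_cast
      ring_nf
    rw [List.ofFn_succ, BopDeriv, ih, Finset.mul_sum, smul_mul_assoc]
    conv_rhs => rw [Fin.sum_univ_succ, rmv_zero]
    congr 1
    refine Finset.sum_congr rfl fun j _ => ?_
    rw [rmv_succ, mul_smul_comm, ← mul_assoc, hshift, mul_assoc]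
    rfl

end Algebra

section Gaudin

variable {H : Type*} [NormedAddCommGroup H] [NormedSpace ℂ H] {N : ℕ}

theorem XmGaudinC_mul_comm (z : Fin N → ℂ) (ξ : ℂ) (hA XmA : Fin N → (H →L[ℂ] H))
    (hhXm : ∀ a b, hA a * XmA b - XmA b * hA a = if a = b then (-2 : ℂ) • XmA a else 0)
    (hXmXm : ∀ a b, XmA a * XmA b = XmA b * XmA a) (a : Fin N) (lam : ℂ) :
    XmGaudinC z ξ XmA hA lam * XmA a = XmA a * XmGaudinC z ξ XmA hA lam + ξ • XmA a := by
  have hterm : ∀ b, ((lam - z b)⁻¹ • XmA b - (ξ / 2) • hA b) * XmA a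
      = XmA a * ((lam - z b)⁻¹ • XmA b - (ξ / 2) • hA b) + if b = a then ξ • XmA a else 0 := by
    intro b
    have hh : hA b * XmA a = XmA a * hA b + if b = a then (-2 : ℂ) • XmA b else 0 := by
      rw [← hhXm b a]; abel
    rw [sub_mul, mul_sub, smul_mul_assoc, smul_mul_assoc, mul_smul_comm, mul_smul_comm,
      hXmXm b a, hh]
    split_ifs with hba
    · subst hba; module
    · simp
  simp only [XmGaudinC, Finset.sum_mul, Finset.mul_sum, hterm, Finset.sum_add_distrib,
    Finset.sum_ite_eq', Finset.mem_univ, if_true]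

theorem hasDerivAt_XmGaudinC_update (z : Fin N → ℂ) (ξ : ℂ) (hA XmA : Fin N → (H →L[ℂ] H))
    (a : Fin N) {lam : ℂ} (hlam : lam ≠ z a) :
    HasDerivAt (fun t => XmGaudinC (Function.update z a t) ξ XmA hA lam)
      (((lam - z a) ^ 2)⁻¹ • XmA a) (z a) := by
  have hinv : HasDerivAt (fun t => (lam - t)⁻¹) (((lam - z a) ^ 2)⁻¹) (z a) := by
    simpa using (hasDerivAt_inv (sub_ne_zero.mpr hlam)).comp_const_sub lam (z a)
  have hterm : ∀ b, HasDerivAt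
      (fun t => (lam - Function.update z a t b)⁻¹ • XmA b - (ξ / 2) • hA b)
      (if b = a then ((lam - z a) ^ 2)⁻¹ • XmA a else 0) (z a) := by
    intro b
    by_cases hba : b = a
    · subst hba
      simpa using (hinv.smul_const (XmA b)).sub_const ((ξ / 2) • hA b)
    · simpa [Function.update_of_ne hba, hba] using hasDerivAt_const (z a) _
  simpa [XmGaudinC] using HasDerivAt.fun_sum fun b (_ : b ∈ Finset.univ) => hterm b

end Gaudin

theorem deriv_inv_sub_smul_sub_mul {A : Type*} [NormedRing A] [NormedAlgebra ℂ A]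
    (X Y B : A) {z s₀ : ℂ} (hs₀ : s₀ ≠ z) :
    deriv (fun s => ((s - z)⁻¹ • X - Y) * B) s₀ = -(((s₀ - z) ^ 2)⁻¹ • (X * B)) := by
  have hinv : HasDerivAt (fun s => (s - z)⁻¹) (-((s₀ - z) ^ 2)⁻¹) s₀ :=
    (hasDerivAt_inv (sub_ne_zero.mpr hs₀)).comp_sub_const s₀ z
  rw [(((hinv.smul_const X).sub_const Y).mul_const B).deriv, neg_smul, neg_mul, smul_mul_assoc]

theorem Bop_z_derivative_general
    {H : Type*} [NormedAddCommGroup H] [NormedSpace ℂ H]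
    (N : ℕ) (z : Fin N → ℂ) (ξ : ℂ)
    (hA XmA : Fin N → (H →L[ℂ] H))
    (hhXm : ∀ a b, hA a * XmA b - XmA b * hA a = if a = b then (-2 : ℂ) • XmA a else 0)
    (hXmXm : ∀ a b, XmA a * XmA b = XmA b * XmA a)
    (M : ℕ) (μ : Fin (M + 1) → ℂ)
    (hdisj : ∀ i b, μ i ≠ z b) (a : Fin N) :
    deriv (fun t =>
        Bop (XmGaudinC (Function.update z a t) ξ XmA hA) ξ 0 (List.ofFn μ)) (z a) =
      -∑ i, deriv (fun s =>
        ((s - z a)⁻¹ • XmA a - (ξ / 2) • hA a) *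
          Bop (XmGaudinC z ξ XmA hA) ξ 1 (rmv μ i)) (μ i) := by
  have hfactor : ∀ lam ∈ List.ofFn μ,
      HasDerivAt (fun t => XmGaudinC (Function.update z a t) ξ XmA hA lam)
        (((lam - z a) ^ 2)⁻¹ • XmA a) (z a) := by
    intro lam hlam
    obtain ⟨i, rfl⟩ := List.mem_ofFn.mp hlam
    exact hasDerivAt_XmGaudinC_update z ξ hA XmA a (hdisj i a)
  have hB := hasDerivAt_Bop (fun t => XmGaudinC (Function.update z a t) ξ XmA hA) _ ξ (z a)
    (List.ofFn μ) hfactor 0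
  rw [Function.update_eq_self] at hB
  rw [hB.deriv, BopDeriv_smul_eq_sum _ _ (fun lam => ((lam - z a) ^ 2)⁻¹) _
    (XmGaudinC_mul_comm z ξ hA XmA hhXm hXmXm a), ← Finset.sum_neg_distrib]
  refine Finset.sum_congr rfl fun i _ => ?_
  rw [deriv_inv_sub_smul_sub_mul (XmA a) ((ξ / 2) • hA a) _ (hdisj i a), neg_neg]

/-- the analytic identity
    ∂B_M(μ)/∂z_a = −∑_i ∂/∂μᵢ ( X⁻_a(μᵢ) B^(1)_{M−1}(μ^(i)) ),
    where X⁻_a(μ) = X⁻_a/(μ−z_a) − (ξ/2)h_a. -/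
theorem Bop_z_derivative
    {H : Type*} [NormedAddCommGroup H] [NormedSpace ℂ H]
    (N : ℕ) (z : Fin N → ℂ) (hz : Function.Injective z) (ξ : ℂ)
    (hA XmA : Fin N → (H →L[ℂ] H))
    (hhXm : ∀ a b, hA a * XmA b - XmA b * hA a = if a = b then (-2 : ℂ) • XmA a else 0)
    (hXmXm : ∀ a b, XmA a * XmA b = XmA b * XmA a)
    (M : ℕ) (μ : Fin (M + 1) → ℂ) (hμ : Function.Injective μ)
    (hdisj : ∀ i b, μ i ≠ z b) (a : Fin N) :
    deriv (fun t =>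
        Bop (XmGaudinC (Function.update z a t) ξ XmA hA) ξ 0 (List.ofFn μ)) (z a) =
      -∑ i, deriv (fun s =>
        ((s - z a)⁻¹ • XmA a - (ξ / 2) • hA a) *
          Bop (XmGaudinC z ξ XmA hA) ξ 1 (rmv μ i)) (μ i) :=
  Bop_z_derivative_general N z ξ hA XmA hhXm hXmXm M μ hdisj a
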